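/- arXiv:1406.2626 — 2 statements merged into one kernel-verified Lean document; each statement's English description precedes it below -/
import Mathlib

section
/- Let w be a Galerkin solution. Then sup_{s ≥ −k₀} ‖w(s,·)‖ ≤ ‖f‖/γ + (μ/γ)^{1/2} |v|_X. -/
open MeasureTheory Finset

/-- The `L²` norm `(∫₀^L ‖g x‖² dx)^{1/2}` of a function on the circle `AddCircle L`
(recall that the standard measure on `AddCircle L` has total mass `L`). -/
noncomputable def l2norm (L : ℝ) [Fact (0 < L)] (g : AddCircle L → ℂ) : ℝ :=
  Real.sqrt (∫ x : AddCircle L, ‖g x‖ ^ 2)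

/-- The trigonometric polynomial `x ↦ ∑_{|k| ≤ N} c k · e^{2πikx/L}` on `AddCircle L`. -/
noncomputable def trigSum (L : ℝ) (N : ℕ) (c : ℤ → ℂ) : AddCircle L → ℂ :=
  fun x => ∑ k ∈ Finset.Icc (-(N : ℤ)) (N : ℤ), c k * fourier k x

/-- The low-mode Fourier projection `P_N g = ∑_{|k| ≤ N} ĝ(k) e^{2πikx/L}`. -/
noncomputable def lowProj (L : ℝ) [Fact (0 < L)] (N : ℕ) (g : AddCircle L → ℂ) :
    AddCircle L → ℂ :=
  trigSum L N (fun k => fourierCoeff g k)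

/-- A Galerkin solution of the feedback-controlled damped driven NLS:
`w(s,x) = ∑_{|k| ≤ n} a_k(s) e^{2πikx/L}` with differentiable coefficients on `[-k₀, ∞)`,
satisfying `i ∂ₛ w + ∂ₓ² w + P_n(|w|² w) + iγ w = P_n f - iμ (P_m w - v(s))`
with `w(-k₀, ·) = 0`, where the datum `v(s) = ∑_{|k| ≤ m} (vc k s) e^{2πikx/L}` is a
continuously differentiable map into trigonometric polynomials of degree ≤ m with
finite `X`-norm `sup_s ‖v(s)‖ + sup_s ‖∂ₛ v(s)‖`. -/
structure GalerkinSolution (L : ℝ) [Fact (0 < L)] where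
  /-- damping parameter -/
  γ : ℝ
  /-- feedback (relaxation) parameter -/
  μ : ℝ
  hγ : 0 < γ
  hμ : 0 < μ
  /-- number of observed low modes -/
  m : ℕ
  /-- Galerkin truncation level -/
  n : ℕ
  hmn : m ≤ n
  /-- the forcing term, in `L²(AddCircle L)` -/
  f : AddCircle L → ℂ
  hf : MeasureTheory.MemLp f 2 MeasureTheory.volume
  /-- the initial time is `-k₀` -/
  k₀ : ℝ
  /-- the Fourier coefficients of the datum `v` -/
  vc : ℤ → ℝ → ℂ
  hvc : ∀ k : ℤ, ContDiff ℝ 1 (vc k)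
  /-- `|v|_X < ∞` -/
  hvX : ∃ C : ℝ, ∀ s : ℝ,
    l2norm L (trigSum L m (fun k => vc k s))
      + l2norm L (trigSum L m (fun k => deriv (vc k) s)) ≤ C
  /-- the coefficients of the Galerkin solution -/
  a : ℤ → ℝ → ℂ
  /-- the time derivatives of the coefficients -/
  a' : ℤ → ℝ → ℂ
  ha : ∀ (k : ℤ) (s : ℝ), -k₀ ≤ s → HasDerivWithinAt (a k) (a' k s) (Set.Ici (-k₀)) s
  hinit : ∀ k : ℤ, a k (-k₀) = 0
  heq : ∀ (s : ℝ), -k₀ ≤ s → ∀ x : AddCircle L,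
    Complex.I * trigSum L n (fun k => a' k s) x
      + trigSum L n (fun k => Complex.ofReal (-((2 * Real.pi * (k : ℝ) / L) ^ 2)) * a k s) x
      + lowProj L n (fun y => Complex.ofReal (‖trigSum L n (fun k => a k s) y‖ ^ 2)
          * trigSum L n (fun k => a k s) y) x
      + Complex.I * (γ : ℂ) * trigSum L n (fun k => a k s) x
      = lowProj L n f x
        - Complex.I * (μ : ℂ) * (lowProj L m (trigSum L n (fun k => a k s)) x
            - trigSum L m (fun k => vc k s) x)

namespace GalerkinSolution

variable {L : ℝ} [Fact (0 < L)]

/-- the solution `w(s, ·)` -/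
noncomputable def w (G : GalerkinSolution L) (s : ℝ) : AddCircle L → ℂ :=
  trigSum L G.n (fun k => G.a k s)

/-- the time derivative `∂ₛ w(s, ·)` -/
noncomputable def ws (G : GalerkinSolution L) (s : ℝ) : AddCircle L → ℂ :=
  trigSum L G.n (fun k => G.a' k s)

/-- the spatial derivative `∂ₓ w(s, ·)` -/
noncomputable def wx (G : GalerkinSolution L) (s : ℝ) : AddCircle L → ℂ :=
  trigSum L G.n (fun k => Complex.ofReal (2 * Real.pi * (k : ℝ) / L) * Complex.I * G.a k s)

/-- the second spatial derivative `∂ₓ² w(s, ·)` -/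
noncomputable def wxx (G : GalerkinSolution L) (s : ℝ) : AddCircle L → ℂ :=
  trigSum L G.n (fun k => Complex.ofReal (-((2 * Real.pi * (k : ℝ) / L) ^ 2)) * G.a k s)

/-- the datum `v(s)` -/
noncomputable def v (G : GalerkinSolution L) (s : ℝ) : AddCircle L → ℂ :=
  trigSum L G.m (fun k => G.vc k s)

/-- the time derivative `∂ₛ v(s)` of the datum -/
noncomputable def vs (G : GalerkinSolution L) (s : ℝ) : AddCircle L → ℂ :=
  trigSum L G.m (fun k => deriv (G.vc k) s)

/-- the norm `|v|_X = sup_s ‖v(s)‖ + sup_s ‖∂ₛ v(s)‖` of the datum -/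
noncomputable def normX (G : GalerkinSolution L) : ℝ :=
  (⨆ s : ℝ, l2norm L (G.v s)) + ⨆ s : ℝ, l2norm L (G.vs s)

end GalerkinSolution

/-!
Testing the Galerkin equation mode by mode against `w` and taking imaginary parts gives an energy
identity for `E = ∑_{|k| ≤ n} |a_k|²`: the dispersive term and the cubic term (which pairs to
`∫ |w|⁴`) are real and drop out, leaving
`E'/2 = -γ E + Im ⟨w, f⟩ - μ ‖P_m w‖² + μ Re ⟨P_m w, v⟩`.
Cauchy–Schwarz and `-P + √P V ≤ V²/4` turn this into `E' ≤ 2 (-γ E + F √E) + μ V² / 2`, whose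
right-hand side is negative as soon as `√E > F/γ + √(μ/γ) V`. Since `E(-k₀) = 0`, a barrier
argument keeps `√E` below that level, and Parseval translates back to `L²` norms:
`‖w‖ = √L √E`, `F ≤ ‖f‖/√L` and `V = |v|_X/√L`.
-/

open ComplexConjugate

section Fourier

variable {T : ℝ} [hT : Fact (0 < T)]

theorem hasSum_sq_fourierCoeff_of_memLp {f : AddCircle T → ℂ} (hf : MemLp f 2) :
    HasSum (fun i => ‖fourierCoeff f i‖ ^ 2) (T⁻¹ * ∫ t, ‖f t‖ ^ 2) := by
  have hf' := hf.haarAddCircle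
  convert hasSum_sq_fourierCoeff hf'.toLp using 1
  · simp [fourierCoeff_congr_ae hf'.coeFn_toLp]
  · rw [integral_congr_ae (hf'.coeFn_toLp.mono fun t ht => by rw [ht]),
      AddCircle.integral_haarAddCircle, smul_eq_mul]

theorem sum_sq_fourierCoeff_le {f : AddCircle T → ℂ} (hf : MemLp f 2) (s : Finset ℤ) :
    ∑ i ∈ s, ‖fourierCoeff f i‖ ^ 2 ≤ T⁻¹ * ∫ t, ‖f t‖ ^ 2 :=
  sum_le_hasSum s (fun _ _ => sq_nonneg _) (hasSum_sq_fourierCoeff_of_memLp hf)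

theorem sqrt_sum_sq_fourierCoeff_le {f : AddCircle T → ℂ} (hf : MemLp f 2) (s : Finset ℤ) :
    √(∑ i ∈ s, ‖fourierCoeff f i‖ ^ 2) ≤ l2norm T f / √T := by
  calc √(∑ i ∈ s, ‖fourierCoeff f i‖ ^ 2) ≤ √(T⁻¹ * ∫ t, ‖f t‖ ^ 2) :=
        Real.sqrt_le_sqrt (sum_sq_fourierCoeff_le hf s)
    _ = l2norm T f / √T := by
        rw [l2norm, Real.sqrt_mul (inv_nonneg.2 hT.out.le), Real.sqrt_inv, inv_mul_eq_div]

end Fourier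

section TrigSum

variable {T : ℝ} (N : ℕ)

theorem continuous_trigSum (c : ℤ → ℂ) : Continuous (trigSum T N c) :=
  continuous_finsetSum _ fun k _ => continuous_const.mul (fourier k).continuous

theorem trigSum_add (c d : ℤ → ℂ) (x : AddCircle T) :
    trigSum T N (fun k => c k + d k) x = trigSum T N c x + trigSum T N d x := by
  simp only [trigSum, add_mul, sum_add_distrib]

theorem trigSum_sub (c d : ℤ → ℂ) (x : AddCircle T) :
    trigSum T N (fun k => c k - d k) x = trigSum T N c x - trigSum T N d x := by
  simp only [trigSum, sub_mul, sum_sub_distrib]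

theorem trigSum_const_mul (z : ℂ) (c : ℤ → ℂ) (x : AddCircle T) :
    trigSum T N (fun k => z * c k) x = z * trigSum T N c x := by
  simp only [trigSum, mul_sum, mul_assoc]

theorem trigSum_eq_of_le {M : ℕ} (hMN : M ≤ N) (c : ℤ → ℂ) :
    trigSum T M c = trigSum T N (fun k => if k ∈ Icc (-(M : ℤ)) M then c k else 0) := by
  ext x
  simp only [trigSum, ite_mul, zero_mul, sum_ite_mem]
  rw [inter_eq_right.2 (Icc_subset_Icc (by omega) (by omega))]

variable [hT : Fact (0 < T)]

theorem fourierCoeff_trigSum (c : ℤ → ℂ) (j : ℤ) :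
    fourierCoeff (trigSum T N c) j = if j ∈ Icc (-(N : ℤ)) N then c j else 0 := by
  have : trigSum T N c = ∑ k ∈ Icc (-(N : ℤ)) N, fun x => c k * fourier k x := by
    ext x; simp [trigSum]
  rw [this, fourierCoeff.sum _ (fun k x => c k * fourier k x) fun k _ =>
    (continuous_const.mul (fourier k).continuous).integrable_of_hasCompactSupport
      (.of_compactSpace _), Finset.sum_apply]
  simp only [fourierCoeff.const_mul, fourierCoeff_fourier, Pi.single_apply, mul_ite, mul_one,
    mul_zero, Finset.sum_ite_eq]

theorem eq_of_trigSum_eq {c d : ℤ → ℂ} (h : ∀ x, trigSum T N c x = trigSum T N d x) {k : ℤ}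
    (hk : k ∈ Icc (-(N : ℤ)) N) : c k = d k := by
  simpa [fourierCoeff_trigSum, hk] using congrArg (fourierCoeff · k) (funext h)

theorem integral_norm_sq_trigSum (c : ℤ → ℂ) :
    ∫ t, ‖trigSum T N c t‖ ^ 2 = T * ∑ k ∈ Icc (-(N : ℤ)) N, ‖c k‖ ^ 2 := by
  have hparseval := hasSum_sq_fourierCoeff_of_memLp
    ((continuous_trigSum (T := T) N c).memLp_of_hasCompactSupport (p := 2)
      (.of_compactSpace _))
  have hfinite : HasSum (fun i => ‖fourierCoeff (trigSum T N c) i‖ ^ 2)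
      (∑ k ∈ Icc (-(N : ℤ)) N, ‖c k‖ ^ 2) := by
    have hcoeff : ∑ k ∈ Icc (-(N : ℤ)) N, ‖c k‖ ^ 2
        = ∑ k ∈ Icc (-(N : ℤ)) N, ‖fourierCoeff (trigSum T N c) k‖ ^ 2 :=
      sum_congr rfl fun k hk => by rw [fourierCoeff_trigSum, if_pos hk]
    rw [hcoeff]
    exact hasSum_sum_of_ne_finset_zero fun i hi => by simp [fourierCoeff_trigSum, hi]
  rw [← hparseval.unique hfinite, mul_inv_cancel_left₀ hT.out.ne']

theorem l2norm_trigSum (c : ℤ → ℂ) :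
    l2norm T (trigSum T N c) = √T * √(∑ k ∈ Icc (-(N : ℤ)) N, ‖c k‖ ^ 2) := by
  rw [l2norm, integral_norm_sq_trigSum, Real.sqrt_mul hT.out.le]

theorem integral_conj_trigSum_mul (c : ℤ → ℂ) {h : AddCircle T → ℂ}
    (hh : Integrable h AddCircle.haarAddCircle) :
    ∫ x, conj (trigSum T N c x) * h x ∂AddCircle.haarAddCircle
      = ∑ k ∈ Icc (-(N : ℤ)) N, conj (c k) * fourierCoeff h k := by
  have hexpand : ∀ x, conj (trigSum T N c x) * h x
      = ∑ k ∈ Icc (-(N : ℤ)) N, conj (c k) * (fourier (-k) x • h x) := by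
    intro x
    simp only [trigSum, map_sum, map_mul, sum_mul, ← fourier_neg, smul_eq_mul, mul_assoc]
  simp_rw [hexpand]
  rw [integral_finsetSum _ fun k _ => (hh.fourier_smul (-k)).const_mul _]
  simp_rw [integral_const_mul, fourierCoeff]

theorem im_sum_conj_mul_fourierCoeff_cubic (c : ℤ → ℂ) :
    (∑ k ∈ Icc (-(N : ℤ)) N, conj (c k)
      * fourierCoeff (fun y => ((‖trigSum T N c y‖ ^ 2 : ℝ) : ℂ) * trigSum T N c y) k).im = 0 := by
  have hcubic : Continuous fun y => ((‖trigSum T N c y‖ ^ 2 : ℝ) : ℂ) * trigSum T N c y := by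
    have := continuous_trigSum (T := T) N c
    fun_prop
  rw [← integral_conj_trigSum_mul N c
    (hcubic.integrable_of_hasCompactSupport (.of_compactSpace _))]
  have hquartic : ∀ y,
      conj (trigSum T N c y) * (((‖trigSum T N c y‖ ^ 2 : ℝ) : ℂ) * trigSum T N c y)
        = ((‖trigSum T N c y‖ ^ 4 : ℝ) : ℂ) := by
    intro y
    rw [mul_left_comm, Complex.conj_mul']
    push_cast
    ring
  rw [integral_congr_ae (ae_of_all _ hquartic), integral_complex_ofReal, Complex.ofReal_im]

end TrigSum

section CauchySchwarz

variable {ι : Type*} (s : Finset ι) (u v : ι → ℂ)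

theorem sum_re_conj_mul_le :
    ∑ i ∈ s, (conj (u i) * v i).re ≤ √(∑ i ∈ s, ‖u i‖ ^ 2) * √(∑ i ∈ s, ‖v i‖ ^ 2) :=
  (sum_le_sum fun i _ => (Complex.re_le_norm _).trans_eq
    (by rw [norm_mul, Complex.norm_conj])).trans (Real.sum_mul_le_sqrt_mul_sqrt s _ _)

theorem sum_im_conj_mul_le :
    ∑ i ∈ s, (conj (u i) * v i).im ≤ √(∑ i ∈ s, ‖u i‖ ^ 2) * √(∑ i ∈ s, ‖v i‖ ^ 2) :=
  (sum_le_sum fun i _ => (Complex.im_le_norm _).trans_eq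
    (by rw [norm_mul, Complex.norm_conj])).trans (Real.sum_mul_le_sqrt_mul_sqrt s _ _)

end CauchySchwarz

theorem energy_rate_neg {γ μ F V r : ℝ} (hγ : 0 < γ) (hμ : 0 ≤ μ) (hF : 0 ≤ F) (hV : 0 ≤ V)
    (hr : F / γ + √(μ / γ) * V < r) :
    2 * (-γ * r ^ 2 + F * r) + μ * V ^ 2 / 2 < 0 := by
  set c := √(μ / γ)
  have hc : γ * c ^ 2 = μ := by
    rw [Real.sq_sqrt (div_nonneg hμ hγ.le)]
    field_simp
  have hcV : 0 ≤ c * V := mul_nonneg (Real.sqrt_nonneg _) hV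
  have hr_gt : c * V < r := by linarith [div_nonneg hF hγ.le]
  have hgap : γ * (c * V) < γ * r - F := by
    have := mul_lt_mul_of_pos_left hr hγ
    rw [mul_add, mul_div_cancel₀ _ hγ.ne'] at this
    linarith
  -- the left side is `μ V²`, so `r (γ r - F)` beats the feedback term `μ V² / 2`
  have hprod : c * V * (γ * (c * V)) < r * (γ * r - F) :=
    mul_lt_mul'' hr_gt hgap hcV (mul_nonneg hγ.le hcV)
  nlinarith

theorem le_of_hasDerivWithinAt_of_neg_above {y y' : ℝ → ℝ} {a b B : ℝ}
    (hy : ∀ t, a ≤ t → HasDerivWithinAt y (y' t) (Set.Ici a) t) (ha : y a ≤ B)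
    (hneg : ∀ t, a ≤ t → B < y t → y' t < 0) (hab : a ≤ b) : y b ≤ B := by
  refine le_of_forall_pos_le_add fun ε hε => ?_
  refine image_le_of_deriv_right_lt_deriv_boundary' (B := fun _ => B + ε) (B' := fun _ => 0)
    (fun t ht => (hy t ht.1).continuousWithinAt.mono Set.Icc_subset_Ici_self)
    (fun t ht => (hy t ht.1).mono (Set.Ici_subset_Ici.2 ht.1)) (by linarith) continuousOn_const
    (fun _ _ => hasDerivWithinAt_const _ _ _)
    (fun t ht hyt => hneg t ht.1 (by linarith)) ⟨hab, le_rfl⟩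

namespace GalerkinSolution

variable {L : ℝ} [Fact (0 < L)] (G : GalerkinSolution L)

theorem mode_equation {s : ℝ} (hs : -G.k₀ ≤ s) {k : ℤ} (hk : k ∈ Icc (-(G.n : ℤ)) G.n) :
    Complex.I * G.a' k s + Complex.ofReal (-((2 * Real.pi * (k : ℝ) / L) ^ 2)) * G.a k s
      + fourierCoeff (fun y => Complex.ofReal (‖G.w s y‖ ^ 2) * G.w s y) k
      + Complex.I * G.γ * G.a k s
      = fourierCoeff G.f k
        - if k ∈ Icc (-(G.m : ℤ)) G.m then Complex.I * G.μ * (G.a k s - G.vc k s) else 0 := by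
  have h : ∀ x, trigSum L G.n (fun k => Complex.I * G.a' k s
        + Complex.ofReal (-((2 * Real.pi * (k : ℝ) / L) ^ 2)) * G.a k s
        + fourierCoeff (fun y => Complex.ofReal (‖G.w s y‖ ^ 2) * G.w s y) k
        + Complex.I * G.γ * G.a k s) x
      = trigSum L G.n (fun k => fourierCoeff G.f k - if k ∈ Icc (-(G.m : ℤ)) G.m
          then Complex.I * G.μ * (fourierCoeff (G.w s) k - G.vc k s) else 0) x := by
    intro x
    rw [trigSum_sub, ← trigSum_eq_of_le _ G.hmn, trigSum_const_mul, trigSum_sub]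
    simp only [trigSum_add, trigSum_const_mul]
    exact G.heq s hs x
  rw [eq_of_trigSum_eq _ h hk, w, fourierCoeff_trigSum, if_pos hk]

theorem re_conj_mul_deriv_coeff {s : ℝ} (hs : -G.k₀ ≤ s) {k : ℤ}
    (hk : k ∈ Icc (-(G.n : ℤ)) G.n) :
    (conj (G.a k s) * G.a' k s).re
      = -G.γ * ‖G.a k s‖ ^ 2 + (conj (G.a k s) * fourierCoeff G.f k).im
        - (conj (G.a k s) * fourierCoeff (fun y => Complex.ofReal (‖G.w s y‖ ^ 2) * G.w s y) k).im
        - if k ∈ Icc (-(G.m : ℤ)) G.m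
          then G.μ * ‖G.a k s‖ ^ 2 - G.μ * (conj (G.a k s) * G.vc k s).re else 0 := by
  have h := congrArg (fun z => (conj (G.a k s) * z).im) (G.mode_equation hs hk)
  split_ifs at h ⊢ <;>
  · simp only [mul_add, mul_sub, mul_zero, sub_zero, Complex.add_im, Complex.sub_im,
      Complex.mul_im, Complex.mul_re, Complex.conj_re, Complex.conj_im, Complex.I_re,
      Complex.I_im, Complex.ofReal_re, Complex.ofReal_im, Complex.sq_norm,
      Complex.normSq_apply] at h ⊢
    linarith

theorem energy_identity {s : ℝ} (hs : -G.k₀ ≤ s) :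
    ∑ k ∈ Icc (-(G.n : ℤ)) G.n, (conj (G.a k s) * G.a' k s).re
      = -G.γ * ∑ k ∈ Icc (-(G.n : ℤ)) G.n, ‖G.a k s‖ ^ 2
        + ∑ k ∈ Icc (-(G.n : ℤ)) G.n, (conj (G.a k s) * fourierCoeff G.f k).im
        - G.μ * ∑ k ∈ Icc (-(G.m : ℤ)) G.m, ‖G.a k s‖ ^ 2
        + G.μ * ∑ k ∈ Icc (-(G.m : ℤ)) G.m, (conj (G.a k s) * G.vc k s).re := by
  have hmn : Icc (-(G.m : ℤ)) G.m ⊆ Icc (-(G.n : ℤ)) G.n :=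
    Icc_subset_Icc (by simpa using G.hmn) (by simpa using G.hmn)
  have hcubic : (∑ k ∈ Icc (-(G.n : ℤ)) G.n, conj (G.a k s)
      * fourierCoeff (fun y => Complex.ofReal (‖G.w s y‖ ^ 2) * G.w s y) k).im = 0 :=
    im_sum_conj_mul_fourierCoeff_cubic G.n _
  rw [Complex.im_sum] at hcubic
  rw [sum_congr rfl fun k hk => G.re_conj_mul_deriv_coeff hs hk, sum_sub_distrib, sum_sub_distrib,
    sum_add_distrib, sum_ite_mem, inter_eq_right.2 hmn, ← mul_sum, sum_sub_distrib, ← mul_sum,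
    ← mul_sum, hcubic]
  ring

noncomputable def energy (t : ℝ) : ℝ := ∑ k ∈ Icc (-(G.n : ℤ)) G.n, ‖G.a k t‖ ^ 2

theorem energy_nonneg (t : ℝ) : 0 ≤ G.energy t := sum_nonneg fun _ _ => sq_nonneg _

theorem energy_neg_k₀ : G.energy (-G.k₀) = 0 := by simp [energy, G.hinit]

theorem l2norm_w (t : ℝ) : l2norm L (G.w t) = √L * √(G.energy t) := l2norm_trigSum _ _

theorem hasDerivWithinAt_energy {t : ℝ} (ht : -G.k₀ ≤ t) :
    HasDerivWithinAt G.energy (2 * ∑ k ∈ Icc (-(G.n : ℤ)) G.n, (conj (G.a k t) * G.a' k t).re)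
      (Set.Ici (-G.k₀)) t := by
  refine (HasDerivWithinAt.fun_sum fun k _ => (G.ha k t ht).norm_sq).congr_deriv ?_
  simp only [Complex.inner, mul_sum, mul_comm (G.a' _ t)]

theorem deriv_energy_le {t : ℝ} (ht : -G.k₀ ≤ t) {V : ℝ}
    (hV : √(∑ k ∈ Icc (-(G.m : ℤ)) G.m, ‖G.vc k t‖ ^ 2) ≤ V) :
    2 * ∑ k ∈ Icc (-(G.n : ℤ)) G.n, (conj (G.a k t) * G.a' k t).re
      ≤ 2 * (-G.γ * G.energy t
        + √(∑ k ∈ Icc (-(G.n : ℤ)) G.n, ‖fourierCoeff G.f k‖ ^ 2) * √(G.energy t))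
        + G.μ * V ^ 2 / 2 := by
  set P := ∑ k ∈ Icc (-(G.m : ℤ)) G.m, ‖G.a k t‖ ^ 2
  have hforcing := sum_im_conj_mul_le (Icc (-(G.n : ℤ)) G.n) (fun k => G.a k t) (fourierCoeff G.f)
  have hfeedback := sum_re_conj_mul_le (Icc (-(G.m : ℤ)) G.m) (fun k => G.a k t) (G.vc · t)
  have hP : √P * √(∑ k ∈ Icc (-(G.m : ℤ)) G.m, ‖G.vc k t‖ ^ 2) ≤ √P * V :=
    mul_le_mul_of_nonneg_left hV (Real.sqrt_nonneg _)
  have hP0 : 0 ≤ P := sum_nonneg fun k _ => sq_nonneg _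
  have hAMGM : -P + √P * V ≤ V ^ 2 / 4 := by
    nlinarith [sq_nonneg (√P - V / 2), Real.sq_sqrt hP0]
  rw [G.energy_identity ht]
  rw [← energy] at hforcing ⊢
  nlinarith [G.hμ]

theorem l2norm_v_le_normX (t : ℝ) : l2norm L (G.v t) ≤ G.normX := by
  obtain ⟨C, hC⟩ : ∃ C, ∀ t, l2norm L (G.v t) + l2norm L (G.vs t) ≤ C := G.hvX
  have h0 (g : AddCircle L → ℂ) : 0 ≤ l2norm L g := Real.sqrt_nonneg _
  have hv (t : ℝ) : l2norm L (G.v t) ≤ C := by linarith [hC t, h0 (G.vs t)]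
  have hvs (t : ℝ) : l2norm L (G.vs t) ≤ C := by linarith [hC t, h0 (G.v t)]
  have h1 := le_ciSup ⟨C, Set.forall_mem_range.2 hv⟩ t
  have h2 := (h0 _).trans (le_ciSup ⟨C, Set.forall_mem_range.2 hvs⟩ 0)
  rw [normX]
  linarith

end GalerkinSolution

/-- the `L²` bound: every Galerkin solution satisfies
`sup_{s ≥ -k₀} ‖w(s)‖ ≤ ‖f‖/γ + (μ/γ)^{1/2} |v|_X`. -/
theorem galerkin_L2_bound (L : ℝ) [Fact (0 < L)] (G : GalerkinSolution L)
    (s : ℝ) (hs : -G.k₀ ≤ s) :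
    l2norm L (G.w s) ≤ l2norm L G.f / G.γ + Real.sqrt (G.μ / G.γ) * G.normX := by
  have hsqrtL : 0 < √L := Real.sqrt_pos.2 Fact.out
  set F := √(∑ k ∈ Icc (-(G.n : ℤ)) G.n, ‖fourierCoeff G.f k‖ ^ 2)
  set V := G.normX / √L
  set R := F / G.γ + √(G.μ / G.γ) * V
  have hF : F ≤ l2norm L G.f / √L := sqrt_sum_sq_fourierCoeff_le G.hf _
  have hV (t : ℝ) : √(∑ k ∈ Icc (-(G.m : ℤ)) G.m, ‖G.vc k t‖ ^ 2) ≤ V := by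
    rw [le_div_iff₀ hsqrtL, mul_comm, ← l2norm_trigSum]
    exact G.l2norm_v_le_normX t
  have hV0 : 0 ≤ V := (Real.sqrt_nonneg _).trans (hV 0)
  have hR0 : 0 ≤ R :=
    add_nonneg (div_nonneg (Real.sqrt_nonneg _) G.hγ.le) (mul_nonneg (Real.sqrt_nonneg _) hV0)
  have hE : G.energy s ≤ R ^ 2 := by
    refine le_of_hasDerivWithinAt_of_neg_above (fun t ht => G.hasDerivWithinAt_energy ht)
      (by rw [G.energy_neg_k₀]; positivity)
      (fun t ht hRt => (G.deriv_energy_le ht (hV t)).trans_lt ?_) hs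
    have := energy_rate_neg G.hγ G.hμ.le (Real.sqrt_nonneg _) hV0 ((Real.lt_sqrt hR0).2 hRt)
    rwa [Real.sq_sqrt (G.energy_nonneg t)] at this
  calc l2norm L (G.w s) = √L * √(G.energy s) := G.l2norm_w s
    _ ≤ √L * R := by gcongr; exact (Real.sqrt_le_left hR0).2 hE
    _ = √L * F / G.γ + √(G.μ / G.γ) * G.normX := by
        simp only [R, V]; field_simp
    _ ≤ l2norm L G.f / G.γ + √(G.μ / G.γ) * G.normX := by
        gcongr
        · exact G.hγ.le
        · rwa [le_div_iff₀ hsqrtL, mul_comm] at hF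
end

section
/- There is a constant c > 0 depending only on L with the following property: for every continuously differentiable w : AddCircle L → ℂ, every f, v ∈ L²(AddCircle L), every μ ≥ 0 and R > 0 with ‖w‖ ≤ R, and every ξ ∈ (0,1), one has ‖w_x‖² − (1/2)‖w‖_{L⁴}⁴ + 2 Re ∫₀^L f·conj(w) − 2μ Im ∫₀^L v·conj(w) ≥ (1−ξ)(‖w_x‖² + ‖w‖²) − [c²R⁶/(16ξ) + (c/2)R⁴ + 2‖f‖R + 2μ‖v‖R + (1−ξ)R²]. -/
/-! An Agmon-type inequality drives the estimate. Integrating `d/dx ‖w‖² = 2⟪w, w_x⟫` over at most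
one period, starting from a point where `‖w‖²` is below its mean `‖w‖²/L`, gives
`‖w‖_∞² ≤ ‖w‖²/L + 2‖w‖‖w_x‖`, hence `‖w‖_{L⁴}⁴ ≤ ‖w‖⁴/L + 2‖w‖³‖w_x‖`. Young's inequality
`‖w‖³‖w_x‖ ≤ ξ‖w_x‖² + ‖w‖⁶/(4ξ)` and Cauchy–Schwarz for the two pairings finish the proof. -/

open MeasureTheory Finset

lemma continuous_of_hasDerivAt_comp_coe {L : ℝ} {E : Type*} [NormedAddCommGroup E]
    [NormedSpace ℝ E] {w w' : AddCircle L → E}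
    (hw : ∀ t : ℝ, HasDerivAt (fun τ : ℝ => w (τ : AddCircle L)) (w' (t : AddCircle L)) t) :
    Continuous w :=
  QuotientAddGroup.isOpenQuotientMap_mk.continuous_comp_iff.mp
    (continuous_iff_continuousAt.mpr fun t => (hw t).continuousAt)

lemma mul_le_eps_mul_sq_add_sq_div {a b ε : ℝ} (hε : 0 < ε) :
    a * b ≤ ε * b ^ 2 + a ^ 2 / (4 * ε) := by
  have hcancel : a ^ 2 / (4 * ε) * (4 * ε) = a ^ 2 := div_mul_cancel₀ _ (by positivity)
  nlinarith [sq_nonneg (2 * ε * b - a)]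

section
variable {L : ℝ} [Fact (0 < L)]

lemma sq_l2norm (g : AddCircle L → ℂ) : l2norm L g ^ 2 = ∫ x, ‖g x‖ ^ 2 :=
  Real.sq_sqrt (integral_nonneg fun _ => sq_nonneg _)

lemma integral_norm_mul_norm_le_l2norm_mul {g h : AddCircle L → ℂ} (hg : MemLp g 2)
    (hh : MemLp h 2) : ∫ x, ‖g x‖ * ‖h x‖ ≤ l2norm L g * l2norm L h := by
  have := integral_mul_norm_le_Lp_mul_Lq Real.HolderConjugate.two_two
    (by simpa using hg) (by simpa using hh)
  simpa [l2norm, Real.sqrt_eq_rpow] using this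

lemma norm_integral_mul_conj_le {g h : AddCircle L → ℂ} (hg : MemLp g 2) (hh : MemLp h 2) :
    ‖∫ x, g x * starRingEnd ℂ (h x)‖ ≤ l2norm L g * l2norm L h :=
  calc ‖∫ x, g x * starRingEnd ℂ (h x)‖ ≤ ∫ x, ‖g x‖ * ‖h x‖ := by
        simpa using norm_integral_le_integral_norm (fun x => g x * starRingEnd ℂ (h x))
    _ ≤ l2norm L g * l2norm L h := integral_norm_mul_norm_le_l2norm_mul hg hh

lemma exists_sq_norm_le_sq_l2norm_div {w : AddCircle L → ℂ} (hw : Continuous w) :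
    ∃ y : ℝ, ‖w y‖ ^ 2 ≤ l2norm L w ^ 2 / L := by
  obtain ⟨z, hz⟩ := exists_le_average (NeZero.ne volume)
    ((hw.norm.pow 2).integrable_of_hasCompactSupport (.of_compactSpace _))
  refine ⟨AddCircle.equivIoc L 0 z, ?_⟩
  rw [AddCircle.coe_equivIoc, sq_l2norm, div_eq_inv_mul]
  simpa [average_eq, measureReal_def, AddCircle.measure_univ, (Fact.out : 0 < L).le] using hz

lemma sq_norm_le_sq_norm_add_integral {E : Type*} [NormedAddCommGroup E]
    [InnerProductSpace ℝ E] {w w' : AddCircle L → E}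
    (hw : ∀ t : ℝ, HasDerivAt (fun τ : ℝ => w (τ : AddCircle L)) (w' (t : AddCircle L)) t)
    (hw' : Continuous w') (y : ℝ) (z : AddCircle L) :
    ‖w z‖ ^ 2 ≤ ‖w y‖ ^ 2 + 2 * ∫ x, ‖w x‖ * ‖w' x‖ := by
  have hwc := continuous_of_hasDerivAt_comp_coe hw
  have hcoe : Continuous ((↑) : ℝ → AddCircle L) := continuous_quotient_mk'
  set D : ℝ → ℝ := fun t => 2 * inner ℝ (w t) (w' t)
  set K : AddCircle L → ℝ := fun x => 2 * (‖w x‖ * ‖w' x‖)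
  have hD : Continuous D := by fun_prop
  have hK : Continuous fun t : ℝ => K t := by fun_prop
  obtain ⟨x, hx, rfl⟩ : ∃ x ∈ Set.Ioc y (y + L), (x : AddCircle L) = z :=
    ⟨AddCircle.equivIoc L y z, Subtype.prop _, AddCircle.coe_equivIoc⟩
  have ftc : ‖w x‖ ^ 2 - ‖w y‖ ^ 2 = ∫ t in y..x, D t :=
    (intervalIntegral.integral_eq_sub_of_hasDerivAt (fun t _ => (hw t).norm_sq)
      (hD.intervalIntegrable _ _)).symm
  have : ∫ t in y..x, D t ≤ ∫ x, K x :=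
    calc ∫ t in y..x, D t
        ≤ ∫ t in y..x, K t := intervalIntegral.integral_mono_on hx.1.le
          (hD.intervalIntegrable _ _) (hK.intervalIntegrable _ _)
          fun t _ => by simpa [D, K] using real_inner_le_norm (w t) (w' t)
      _ ≤ ∫ t in y..y + L, K t := intervalIntegral.integral_mono_interval le_rfl hx.1.le hx.2
          (.of_forall fun t => by positivity) (hK.intervalIntegrable _ _)
      _ = ∫ x, K x := AddCircle.intervalIntegral_preimage L y K
  rw [integral_const_mul] at this
  linarith

lemma sq_norm_le_of_hasDerivAt {w w' : AddCircle L → ℂ}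
    (hw : ∀ t : ℝ, HasDerivAt (fun τ : ℝ => w (τ : AddCircle L)) (w' (t : AddCircle L)) t)
    (hw' : Continuous w') (z : AddCircle L) :
    ‖w z‖ ^ 2 ≤ l2norm L w ^ 2 / L + 2 * (l2norm L w * l2norm L w') := by
  have hwc := continuous_of_hasDerivAt_comp_coe hw
  obtain ⟨y, hy⟩ := exists_sq_norm_le_sq_l2norm_div hwc
  have := integral_norm_mul_norm_le_l2norm_mul
    (hwc.memLp_of_hasCompactSupport (.of_compactSpace _))
    (hw'.memLp_of_hasCompactSupport (.of_compactSpace _))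
  linarith [sq_norm_le_sq_norm_add_integral hw hw' y z]

lemma integral_norm_pow_four_le {w w' : AddCircle L → ℂ}
    (hw : ∀ t : ℝ, HasDerivAt (fun τ : ℝ => w (τ : AddCircle L)) (w' (t : AddCircle L)) t)
    (hw' : Continuous w') :
    ∫ x, ‖w x‖ ^ 4 ≤ l2norm L w ^ 4 / L + 2 * (l2norm L w ^ 3 * l2norm L w') := by
  have hwc := continuous_of_hasDerivAt_comp_coe hw
  set B := l2norm L w ^ 2 / L + 2 * (l2norm L w * l2norm L w')
  calc ∫ x, ‖w x‖ ^ 4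
      ≤ ∫ x, B * ‖w x‖ ^ 2 :=
        integral_mono ((hwc.norm.pow 4).integrable_of_hasCompactSupport (.of_compactSpace _))
          (((hwc.norm.pow 2).integrable_of_hasCompactSupport (.of_compactSpace _)).const_mul B)
          fun x => by
            rw [show ‖w x‖ ^ 4 = ‖w x‖ ^ 2 * ‖w x‖ ^ 2 by ring]
            exact mul_le_mul_of_nonneg_right (sq_norm_le_of_hasDerivAt hw hw' x) (sq_nonneg _)
    _ = l2norm L w ^ 4 / L + 2 * (l2norm L w ^ 3 * l2norm L w') := by
        rw [integral_const_mul, ← sq_l2norm]; ring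

lemma phi_lower_bound_of_l2norm {w w' : AddCircle L → ℂ}
    (hw : ∀ t : ℝ, HasDerivAt (fun τ : ℝ => w (τ : AddCircle L)) (w' (t : AddCircle L)) t)
    (hw' : Continuous w') {f v : AddCircle L → ℂ} (hf : MemLp f 2) (hv : MemLp v 2)
    {μ ξ : ℝ} (hμ : 0 ≤ μ) (hξ : 0 < ξ) :
    (1 - ξ) * l2norm L w' ^ 2 - l2norm L w ^ 6 / (4 * ξ) - l2norm L w ^ 4 / (2 * L)
        - 2 * (l2norm L f * l2norm L w) - 2 * μ * (l2norm L v * l2norm L w) ≤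
      l2norm L w' ^ 2 - (1 / 2) * (∫ x, ‖w x‖ ^ 4)
        + 2 * (∫ x, f x * starRingEnd ℂ (w x)).re
        - 2 * μ * (∫ x, v x * starRingEnd ℂ (w x)).im := by
  have hwL2 : MemLp w 2 :=
    (continuous_of_hasDerivAt_comp_coe hw).memLp_of_hasCompactSupport (.of_compactSpace _)
  have hf' := (Complex.abs_re_le_norm _).trans (norm_integral_mul_conj_le hf hwL2)
  have hv' := (Complex.abs_im_le_norm _).trans (norm_integral_mul_conj_le hv hwL2)
  have hμv := mul_le_mul_of_nonneg_left (abs_le.mp hv').2 hμ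
  have young : l2norm L w ^ 3 * l2norm L w' ≤ ξ * l2norm L w' ^ 2 + l2norm L w ^ 6 / (4 * ξ) := by
    have := mul_le_eps_mul_sq_add_sq_div (a := l2norm L w ^ 3) (b := l2norm L w') hξ
    rwa [← pow_mul] at this
  have hL : l2norm L w ^ 4 / (2 * L) = 1 / 2 * (l2norm L w ^ 4 / L) := by ring
  linarith [(abs_le.mp hf').1, integral_norm_pow_four_le hw hw']

end

/-- lower bound for the functional `φ`: there is `c > 0` depending only on
`L` such that for every continuously differentiable `w`, every `f, v ∈ L²`, every `μ ≥ 0`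
and `R > 0` with `‖w‖ ≤ R`, and every `ξ ∈ (0,1)`:
`‖w_x‖² - (1/2)‖w‖_{L⁴}⁴ + 2 Re ∫ f conj w - 2μ Im ∫ v conj w
  ≥ (1-ξ)(‖w_x‖² + ‖w‖²) - [c²R⁶/(16ξ) + (c/2)R⁴ + 2‖f‖R + 2μ‖v‖R + (1-ξ)R²]`. -/
theorem phi_lower_bound (L : ℝ) [Fact (0 < L)] :
    ∃ c : ℝ, 0 < c ∧ ∀ (w w' : AddCircle L → ℂ),
      (∀ t : ℝ, HasDerivAt (fun τ : ℝ => w (τ : AddCircle L)) (w' (t : AddCircle L)) t) →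
      Continuous w' →
      ∀ (f v : AddCircle L → ℂ), MemLp f 2 → MemLp v 2 →
      ∀ (μ R : ℝ), 0 ≤ μ → 0 < R → l2norm L w ≤ R →
      ∀ ξ : ℝ, 0 < ξ → ξ < 1 →
      (l2norm L w') ^ 2 - (1 / 2) * (∫ x : AddCircle L, ‖w x‖ ^ 4)
          + 2 * (∫ x : AddCircle L, f x * (starRingEnd ℂ) (w x)).re
          - 2 * μ * (∫ x : AddCircle L, v x * (starRingEnd ℂ) (w x)).im
        ≥ (1 - ξ) * ((l2norm L w') ^ 2 + (l2norm L w) ^ 2)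
          - (c ^ 2 * R ^ 6 / (16 * ξ) + (c / 2) * R ^ 4 + 2 * l2norm L f * R
            + 2 * μ * l2norm L v * R + (1 - ξ) * R ^ 2) := by
  have hL : 0 < L := Fact.out
  -- `c ≥ 2` absorbs the Young term `R⁶/(4ξ)`, `c ≥ 1/L` the Agmon term `R⁴/(2L)`.
  refine ⟨2 + 1 / L, by positivity, ?_⟩
  intro w w' hw hw' f v hf hv μ R hμ hR hwR ξ hξ hξ1
  have hphi := phi_lower_bound_of_l2norm hw hw' hf hv hμ hξ
  set N := l2norm L w
  have hN : 0 ≤ N := Real.sqrt_nonneg _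
  have hsq : (1 - ξ) * N ^ 2 ≤ (1 - ξ) * R ^ 2 := by gcongr
  have h6 : N ^ 6 / (4 * ξ) ≤ (2 + 1 / L) ^ 2 * R ^ 6 / (16 * ξ) :=
    calc N ^ 6 / (4 * ξ) ≤ R ^ 6 / (4 * ξ) := by gcongr
      _ = 2 ^ 2 * R ^ 6 / (16 * ξ) := by field_simp; ring
      _ ≤ (2 + 1 / L) ^ 2 * R ^ 6 / (16 * ξ) := by gcongr; linarith [one_div_pos.mpr hL]
  have h4 : N ^ 4 / (2 * L) ≤ (2 + 1 / L) / 2 * R ^ 4 := by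
    have : N ^ 4 ≤ R ^ 4 := by gcongr
    calc N ^ 4 / (2 * L) = 1 / L / 2 * N ^ 4 := by ring
      _ ≤ (2 + 1 / L) / 2 * R ^ 4 := by gcongr; linarith
  have hf' : l2norm L f * N ≤ l2norm L f * R := by gcongr; exact Real.sqrt_nonneg _
  have hv' : μ * (l2norm L v * N) ≤ μ * (l2norm L v * R) := by
    gcongr; exact Real.sqrt_nonneg _
  linarith
end
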